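/- Let m(x; y, dy) be the kernel measures of the time-T solution operator of a linear nonlocal dispersal equation with space-periodic coefficients, acting boundedly on each weighted space X(ρ) of continuous functions u with sup_x e^{−ρ‖x‖}|u(x)| < ∞. Then for every μ₀ > 0, ∫_{‖y−x‖ ≥ B} e^{μ‖y−x‖} m(x; y, dy) → 0 as B → ∞, uniformly in x ∈ ℝ^N and uniformly for |μ| ≤ μ₀. -/

import Mathlib

open MeasureTheory

/-!
Translation covariance makes the tail integral `x ↦ ∫_{‖y - x‖ ≥ B} e^{μ‖y - x‖} m(x; dy)`
periodic in every period `pᵢeᵢ`, so it suffices to bound it on a fundamental cell, where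
`‖x‖ ≤ R := ∑ pᵢ`. With `ρ = μ₀ + 1`, the tail weight is at most `e^{-B} e^{ρ‖x‖} e^{ρ‖y‖}`,
so the bound `C` of the kernel on the weighted space `X(ρ)` gives the uniform estimate
`C e^{2ρR} e^{-B}`.
-/

open Filter Function Module Real Submodule

theorem Function.Periodic.of_mem_span_int {α E : Type*} [AddCommGroup E] {f : E → α}
    {s : Set E} (hs : ∀ c ∈ s, Periodic f c) {c : E} (hc : c ∈ span ℤ s) : Periodic f c := by
  induction hc using Submodule.span_induction with
  | mem c hc => exact hs c hc
  | zero => exact fun x => by rw [add_zero]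
  | add _ _ _ _ h₁ h₂ => exact h₁.add_period h₂
  | smul n _ _ h => exact h.zsmul n

theorem ZSpan.apply_fract_eq_of_periodic {α E ι K : Type*} [NormedField K] [LinearOrder K]
    [IsStrictOrderedRing K] [FloorRing K] [NormedAddCommGroup E] [NormedSpace K E] [Fintype ι]
    (b : Basis ι K E) {f : E → α} (hf : ∀ i, Periodic f (b i)) (x : E) :
    f (ZSpan.fract b x) = f x := by
  refine (Periodic.of_mem_span_int ?_ (ZSpan.floor b x).2).sub_eq x
  rintro _ ⟨i, rfl⟩
  exact hf i

theorem periodic_setIntegral_sub_of_map_sub {E G : Type*} [AddCommGroup E] [MeasurableSpace E]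
    [MeasurableAdd E] [NormedAddCommGroup G] [NormedSpace ℝ G] {m : E → Measure E} {v : E}
    (hm : ∀ x, m (x - v) = (m x).map (· - v)) (g : E → G) (s : Set E) :
    Periodic (fun x => ∫ y in (· - x) ⁻¹' s, g (y - x) ∂m x) v := by
  intro x
  have hx := hm (x + v)
  rw [add_sub_cancel_right] at hx
  simp only [hx, (measurableEmbedding_subRight v).setIntegral_map, Set.preimage_preimage,
    sub_sub, add_comm v]

theorem setIntegral_exp_tail_le {E : Type*} [NormedAddCommGroup E] [MeasurableSpace E]
    {ν : Measure E} {ρ μ : ℝ} (hρ : 0 ≤ ρ) (hμ : μ + 1 ≤ ρ)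
    (hint : Integrable (fun y => exp (ρ * ‖y‖)) ν) (B : ℝ) (x : E) :
    ∫ y in {y | B ≤ ‖y - x‖}, exp (μ * ‖y - x‖) ∂ν ≤
      exp (-B) * exp (ρ * ‖x‖) * ∫ y, exp (ρ * ‖y‖) ∂ν := by
  have hexp : ∀ y ∈ {y | B ≤ ‖y - x‖},
      exp (μ * ‖y - x‖) ≤ exp (-B) * exp (ρ * ‖x‖) * exp (ρ * ‖y‖) := by
    intro y (hy : B ≤ ‖y - x‖)
    rw [← exp_add, ← exp_add, exp_le_exp]
    have := norm_sub_le y x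
    nlinarith [norm_nonneg (y - x)]
  calc _ ≤ ∫ y in {y | B ≤ ‖y - x‖}, exp (-B) * exp (ρ * ‖x‖) * exp (ρ * ‖y‖) ∂ν :=
        setIntegral_mono_of_nonneg (fun _ _ => (exp_pos _).le) hexp
          (hint.const_mul _).integrableOn
    _ ≤ ∫ y, exp (-B) * exp (ρ * ‖x‖) * exp (ρ * ‖y‖) ∂ν :=
        setIntegral_le_integral (hint.const_mul _) (ae_of_all _ fun _ => by positivity)
    _ = _ := integral_const_mul _ _

theorem kernel_tail_integral_tendsto_zero_general {N : ℕ} (p : Fin N → ℝ) (hp : ∀ i, 0 < p i)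
    (m : EuclideanSpace ℝ (Fin N) → Measure (EuclideanSpace ℝ (Fin N)))
    (hcov : ∀ (i : Fin N) (x : EuclideanSpace ℝ (Fin N)),
      m (x - p i • EuclideanSpace.single i (1 : ℝ)) =
        Measure.map (fun y => y - p i • EuclideanSpace.single i (1 : ℝ)) (m x))
    (hint : ∀ (x : EuclideanSpace ℝ (Fin N)) (ρ : ℝ), 0 ≤ ρ →
      Integrable (fun y => Real.exp (ρ * ‖y‖)) (m x))
    (hbdd : ∀ ρ : ℝ, 0 ≤ ρ → ∃ C : ℝ, ∀ x,
      (∫ y, Real.exp (ρ * ‖y‖) ∂(m x)) ≤ C * Real.exp (ρ * ‖x‖))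
    (μ₀ : ℝ) (hμ₀ : 0 < μ₀) :
    ∀ ε : ℝ, 0 < ε → ∃ B₀ : ℝ, ∀ B : ℝ, B₀ ≤ B →
      ∀ (x : EuclideanSpace ℝ (Fin N)) (μ : ℝ), |μ| ≤ μ₀ →
        (∫ y in {y | B ≤ ‖y - x‖}, Real.exp (μ * ‖y - x‖) ∂(m x)) < ε := by
  intro ε hε
  set ρ := μ₀ + 1
  have hρ : 0 ≤ ρ := by positivity
  obtain ⟨C, hC⟩ := hbdd ρ hρ
  have hC0 : 0 ≤ C := by
    have := (integral_nonneg fun y => (exp_pos (ρ * ‖y‖)).le).trans (hC 0)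
    exact nonneg_of_mul_nonneg_left this (exp_pos _)
  let b : Basis (Fin N) ℝ (EuclideanSpace ℝ (Fin N)) :=
    (EuclideanSpace.basisFun (Fin N) ℝ).toBasis.isUnitSMul fun i => (hp i).ne'.isUnit
  have hb : ∀ i, b i = p i • EuclideanSpace.single i 1 := fun i => by
    simp [b, Basis.isUnitSMul_apply]
  set R := ∑ i, ‖b i‖
  obtain ⟨B₀, hB₀⟩ := eventually_atTop.1 <| (tendsto_exp_neg_atTop_nhds_zero.mul_const
    (C * exp (2 * ρ * R))).eventually (gt_mem_nhds (by simpa using hε))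
  refine ⟨B₀, fun B hB x μ hμ => ?_⟩
  have hper (i : Fin N) :
      Periodic (fun x => ∫ y in {y | B ≤ ‖y - x‖}, exp (μ * ‖y - x‖) ∂m x) (b i) :=
    periodic_setIntegral_sub_of_map_sub (hb i ▸ hcov i) (fun z => exp (μ * ‖z‖))
      {z | B ≤ ‖z‖}
  set x₀ := ZSpan.fract b x
  have hx₀ : ‖x₀‖ ≤ R := ZSpan.norm_fract_le b x
  calc _ = ∫ y in {y | B ≤ ‖y - x₀‖}, exp (μ * ‖y - x₀‖) ∂m x₀ :=
        (ZSpan.apply_fract_eq_of_periodic b hper x).symm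
    _ ≤ exp (-B) * exp (ρ * ‖x₀‖) * (C * exp (ρ * ‖x₀‖)) := by
        refine (setIntegral_exp_tail_le hρ ?_ (hint x₀ ρ hρ) B x₀).trans ?_
        · linarith [le_abs_self μ]
        · gcongr
          exact hC x₀
    _ = exp (-B) * (C * exp (2 * ρ * ‖x₀‖)) := by
        rw [show 2 * ρ * ‖x₀‖ = ρ * ‖x₀‖ + ρ * ‖x₀‖ by ring, exp_add]
        ring
    _ ≤ exp (-B) * (C * exp (2 * ρ * R)) := by gcongr
    _ < ε := hB₀ B hB

/-- For the kernel measures of the time-T solution operator (translation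
covariant along the periods, and bounded on each exponentially weighted space),
`∫_{‖y-x‖ ≥ B} e^{μ‖y-x‖} m(x; y, dy) → 0` as `B → ∞`, uniformly in `x` and in `|μ| ≤ μ₀`. -/
theorem kernel_tail_integral_tendsto_zero {N : ℕ} (p : Fin N → ℝ) (hp : ∀ i, 0 < p i)
    (m : EuclideanSpace ℝ (Fin N) → Measure (EuclideanSpace ℝ (Fin N)))
    (hfin : ∀ x, IsFiniteMeasure (m x))
    (hcov : ∀ (i : Fin N) (x : EuclideanSpace ℝ (Fin N)),
      m (x - p i • EuclideanSpace.single i (1 : ℝ)) =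
        Measure.map (fun y => y - p i • EuclideanSpace.single i (1 : ℝ)) (m x))
    (hint : ∀ (x : EuclideanSpace ℝ (Fin N)) (ρ : ℝ), 0 ≤ ρ →
      Integrable (fun y => Real.exp (ρ * ‖y‖)) (m x))
    (hbdd : ∀ ρ : ℝ, 0 ≤ ρ → ∃ C : ℝ, ∀ x,
      (∫ y, Real.exp (ρ * ‖y‖) ∂(m x)) ≤ C * Real.exp (ρ * ‖x‖))
    (μ₀ : ℝ) (hμ₀ : 0 < μ₀) :
    ∀ ε : ℝ, 0 < ε → ∃ B₀ : ℝ, ∀ B : ℝ, B₀ ≤ B →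
      ∀ (x : EuclideanSpace ℝ (Fin N)) (μ : ℝ), |μ| ≤ μ₀ →
        (∫ y in {y | B ≤ ‖y - x‖}, Real.exp (μ * ‖y - x‖) ∂(m x)) < ε :=
  kernel_tail_integral_tendsto_zero_general p hp m hcov hint hbdd μ₀ hμ₀
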